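/- arXiv:1602.01657 — 6 statements merged into one kernel-verified Lean document; each statement's English description precedes it below -/
import Mathlib

section
/- Let X and Y be nonnegative real-valued random variables with distribution functions F_X and F_Y. Then there exists t0 > 0 with F_X(t) ≥ F_Y(t) for all t ∈ [0, t0] if and only if there exists t0 > 0 and a coupling (X', Y') of X and Y (i.e., a pair of random variables on a common probability space with the same marginal distributions as X and Y) such that min{X', t0} ≤ min{Y', t0} almost surely. -/
/-!
Quantile coupling: feed one uniform variable `U` on `(0, 1)` into the quantile functions
`q_X` and `q_Y` of both laws. Since `q u ≤ x ↔ u ≤ F(x)`, the inequality `F_Y ≤ F_X` on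
`[0, t₀]` (and trivially on `(-∞, 0)`, as `Y ≥ 0`) gives `q_X(U) ≤ q_Y(U)` whenever
`q_Y(U) ≤ t₀`, i.e. `min (q_X U) t₀ ≤ min (q_Y U) t₀`. Conversely, such a coupling gives
`{Y' ≤ t} ⊆ {X' ≤ t}` almost surely for every `t < t₀`.
-/

open MeasureTheory ProbabilityTheory Set

instance isProbabilityMeasure_volume_restrict_Ioo_zero_one :
    IsProbabilityMeasure (volume.restrict (Ioo (0 : ℝ) 1)) :=
  ⟨by simp⟩

lemma volume_Ioo_zero_one_inter_Iic {c : ℝ} (hc : c ≤ 1) :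
    volume (Ioo (0 : ℝ) 1 ∩ Iic c) = ENNReal.ofReal c := by
  rw [measure_congr (Ioo_ae_eq_Ioc.inter (ae_eq_refl (Iic c))), Ioc_inter_Iic,
    min_eq_right hc, Real.volume_Ioc, sub_zero]

lemma MeasureTheory.Measure.map_apply_Iic {Ω : Type*} [MeasurableSpace Ω] (μ : Measure Ω)
    {X : Ω → ℝ} (hX : Measurable X) (t : ℝ) : μ.map X (Iic t) = μ {ω | X ω ≤ t} :=
  Measure.map_apply hX measurableSet_Iic

namespace ProbabilityTheory

/-- The quantile function of `m`, set to the junk value `0` outside `(0, 1)` so that it is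
measurable on all of `ℝ`. -/
noncomputable def quantile (m : Measure ℝ) (u : ℝ) : ℝ :=
  if u ∈ Ioo (0 : ℝ) 1 then sInf {x | u ≤ cdf m x} else 0

section Quantile

variable (m : Measure ℝ)

lemma quantile_le_iff {u : ℝ} (hu : u ∈ Ioo (0 : ℝ) 1) (x : ℝ) :
    quantile m u ≤ x ↔ u ≤ cdf m x := by
  rw [quantile, if_pos hu]
  have hne : {x | u ≤ cdf m x}.Nonempty :=
    ((tendsto_cdf_atTop m).eventually (eventually_ge_nhds hu.2)).exists
  have hbdd : BddBelow {x | u ≤ cdf m x} := by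
    obtain ⟨x₀, hx₀⟩ := Filter.eventually_atBot.1
      ((tendsto_cdf_atBot m).eventually (eventually_lt_nhds hu.1))
    exact ⟨x₀, fun y hy => le_of_not_gt fun hlt => (hx₀ y hlt.le).not_ge hy⟩
  refine ⟨fun h => ?_, fun h => csInf_le hbdd h⟩
  have h_right : ∀ z ∈ Ioi x, u ≤ cdf m z := fun z hz => by
    obtain ⟨y, hy, hyz⟩ := exists_lt_of_csInf_lt hne (h.trans_lt hz)
    exact hy.trans (monotone_cdf m hyz.le)
  have h_tendsto : Filter.Tendsto (cdf m) (nhdsWithin x (Ioi x)) (nhds (cdf m x)) :=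
    ((cdf m).right_continuous x).mono Ioi_subset_Ici_self
  exact ge_of_tendsto h_tendsto (Filter.eventually_of_mem self_mem_nhdsWithin h_right)

lemma measurable_quantile : Measurable (quantile m) := by
  refine measurable_of_Iic fun x => ?_
  have h_preimage : quantile m ⁻¹' Iic x =
      (Ioo 0 1 ∩ Iic (cdf m x)) ∪ ((Ioo 0 1)ᶜ ∩ {_u | 0 ≤ x}) := by
    ext u
    by_cases hu : u ∈ Ioo (0 : ℝ) 1
    · simp [hu, quantile_le_iff m hu x]
    · simp [quantile, hu]
  rw [h_preimage]
  exact (measurableSet_Ioo.inter measurableSet_Iic).union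
    (measurableSet_Ioo.compl.inter (MeasurableSet.const _))

lemma map_quantile_volume_restrict_Ioo [IsProbabilityMeasure m] :
    (volume.restrict (Ioo (0 : ℝ) 1)).map (quantile m) = m := by
  have := Measure.isProbabilityMeasure_map (μ := volume.restrict (Ioo (0 : ℝ) 1))
    (measurable_quantile m).aemeasurable
  refine Measure.ext_of_Iic _ _ fun x => ?_
  have h_preimage : quantile m ⁻¹' Iic x ∩ Ioo 0 1 = Ioo 0 1 ∩ Iic (cdf m x) := by
    ext u
    by_cases hu : u ∈ Ioo (0 : ℝ) 1
    · simp [hu, quantile_le_iff m hu x]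
    · simp [hu]
  rw [Measure.map_apply (measurable_quantile m) measurableSet_Iic,
    Measure.restrict_apply (measurable_quantile m measurableSet_Iic), h_preimage,
    volume_Ioo_zero_one_inter_Iic (cdf_le_one m x), ofReal_cdf]

end Quantile

theorem min_quantile_le_min_quantile {m₁ m₂ : Measure ℝ} [IsProbabilityMeasure m₁]
    [IsProbabilityMeasure m₂] {t₀ u : ℝ} (h : ∀ t ≤ t₀, m₂ (Iic t) ≤ m₁ (Iic t))
    (hu : u ∈ Ioo (0 : ℝ) 1) : min (quantile m₁ u) t₀ ≤ min (quantile m₂ u) t₀ := by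
  rcases le_or_gt (quantile m₂ u) t₀ with hq | hq
  · have h_cdf : cdf m₂ (quantile m₂ u) ≤ cdf m₁ (quantile m₂ u) := by
      rw [← ENNReal.ofReal_le_ofReal_iff (cdf_nonneg _ _), ofReal_cdf, ofReal_cdf]
      exact h _ hq
    have h_le : quantile m₁ u ≤ quantile m₂ u :=
      (quantile_le_iff m₁ hu _).2 (((quantile_le_iff m₂ hu _).1 le_rfl).trans h_cdf)
    exact min_le_min_right t₀ h_le
  · rw [min_eq_right hq.le]
    exact min_le_right _ _

end ProbabilityTheory

lemma measure_le_le_of_ae_min_le_min {Ω : Type*} [MeasurableSpace Ω] (ν : Measure Ω)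
    {X Y : Ω → ℝ} {t₀ t : ℝ} (h : ∀ᵐ ω ∂ν, min (X ω) t₀ ≤ min (Y ω) t₀) (ht : t < t₀) :
    ν {ω | Y ω ≤ t} ≤ ν {ω | X ω ≤ t} := by
  refine measure_mono_ae ?_
  filter_upwards [h] with ω hω (hYω : Y ω ≤ t)
  exact (min_le_iff.1 (hω.trans ((min_le_left _ _).trans hYω))).resolve_right ht.not_ge

theorem stochastic_domination_around_origin_iff_coupling_general
    {Ω : Type*} [MeasurableSpace Ω] (μ : Measure Ω) [IsProbabilityMeasure μ]
    (X Y : Ω → ℝ) (hX : Measurable X) (hY : Measurable Y)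
    (hY0 : ∀ ω, 0 ≤ Y ω) :
    (∃ t0 > (0:ℝ), ∀ t ∈ Set.Icc (0:ℝ) t0, μ {ω | Y ω ≤ t} ≤ μ {ω | X ω ≤ t}) ↔
    (∃ t0 > (0:ℝ), ∃ (Ω' : Type) (_ : MeasurableSpace Ω') (ν : Measure Ω'),
        IsProbabilityMeasure ν ∧
        ∃ X' Y' : Ω' → ℝ, Measurable X' ∧ Measurable Y' ∧
          ν.map X' = μ.map X ∧ ν.map Y' = μ.map Y ∧
          ∀ᵐ ω ∂ν, min (X' ω) t0 ≤ min (Y' ω) t0) := by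
  constructor
  · rintro ⟨t₀, ht₀, hdom⟩
    have hdom' : ∀ t ≤ t₀, μ.map Y (Iic t) ≤ μ.map X (Iic t) := fun t ht => by
      rw [Measure.map_apply_Iic μ hX, Measure.map_apply_Iic μ hY]
      rcases lt_or_ge t 0 with ht0 | ht0
      · have h_empty : {ω | Y ω ≤ t} = ∅ :=
          eq_empty_of_forall_notMem fun ω hω => (ht0.trans_le (hY0 ω)).not_ge hω
        simp [h_empty]
      · exact hdom t ⟨ht0, ht⟩
    have := Measure.isProbabilityMeasure_map (μ := μ) hX.aemeasurable
    have := Measure.isProbabilityMeasure_map (μ := μ) hY.aemeasurable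
    exact ⟨t₀, ht₀, ℝ, _, volume.restrict (Ioo 0 1), inferInstance, _, _,
      measurable_quantile _, measurable_quantile _, map_quantile_volume_restrict_Ioo _,
      map_quantile_volume_restrict_Ioo _,
      ae_restrict_of_forall_mem measurableSet_Ioo fun _ hu =>
        min_quantile_le_min_quantile hdom' hu⟩
  · rintro ⟨t₀, ht₀, Ω', _, ν, -, X', Y', hX', hY', hXX', hYY', hmin⟩
    refine ⟨t₀ / 2, half_pos ht₀, fun t ht => ?_⟩
    rw [← Measure.map_apply_Iic μ hX, ← Measure.map_apply_Iic μ hY, ← hXX', ← hYY',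
      Measure.map_apply_Iic ν hX', Measure.map_apply_Iic ν hY']
    exact measure_le_le_of_ae_min_le_min ν hmin (ht.2.trans_lt (half_lt_self ht₀))

/-- Stochastic domination around the origin is equivalent to the existence of a
coupling `(X', Y')` of `X` and `Y` with `min X' t0 ≤ min Y' t0` almost surely. -/
theorem stochastic_domination_around_origin_iff_coupling
    {Ω : Type*} [MeasurableSpace Ω] (μ : Measure Ω) [IsProbabilityMeasure μ]
    (X Y : Ω → ℝ) (hX : Measurable X) (hY : Measurable Y)
    (hX0 : ∀ ω, 0 ≤ X ω) (hY0 : ∀ ω, 0 ≤ Y ω) :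
    (∃ t0 > (0:ℝ), ∀ t ∈ Set.Icc (0:ℝ) t0, μ {ω | Y ω ≤ t} ≤ μ {ω | X ω ≤ t}) ↔
    (∃ t0 > (0:ℝ), ∃ (Ω' : Type) (_ : MeasurableSpace Ω') (ν : Measure Ω'),
        IsProbabilityMeasure ν ∧
        ∃ X' Y' : Ω' → ℝ, Measurable X' ∧ Measurable Y' ∧
          ν.map X' = μ.map X ∧ ν.map Y' = μ.map Y ∧
          ∀ᵐ ω ∂ν, min (X' ω) t0 ≤ min (Y' ω) t0) :=
  stochastic_domination_around_origin_iff_coupling_general μ X Y hX hY hY0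
end

section
/- Let K ≥ 1 be an odd integer and p0 ∈ (1/(K+1), 1). Let X and Y be nonnegative integer-valued random variables with P(X = K) = P(Y = 0) = p0, with F_X(ℓ) ≥ F_Y(ℓ) for all ℓ > K, with F_X(ℓ) = F_Y(ℓ) for all odd ℓ > K, and with F_X(ℓ) = F_Y(ℓ) = 0 for ℓ < K except that F_Y(ℓ) = p0 for 0 ≤ ℓ < K. Then there exists s0 < 1 such that for all s ∈ (s0, 1), the generating functions satisfy E[s^X] < E[s^Y]. In particular, although Y tail-dominates X, the generating function of Y is not steeper at 1. -/
open MeasureTheory Filter Topology Finset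

/-!
Write `E[s ^ Z] = (1 - s) ∑ s ^ ℓ F_Z(ℓ)`. The parity hypothesis gives `F_X(ℓ) ≤ F_Y(ℓ + 1)` for
every `ℓ`, so comparing `X` with `Y` shifted down by one costs only `(1 - s) (1 - p0)` (the mass
of `Y` away from `0`), while for `ℓ < K` the shifted gap `F_Y(ℓ + 1) - F_X(ℓ)` is at least `p0`
and gains `(1 - s) p0 (s + ⋯ + s ^ K)`. As `s → 1` the balance tends to `p0 (K + 1) - 1 > 0`.
-/

theorem hasSum_geometric_weight {s : ℝ} (hs0 : 0 ≤ s) (hs1 : s < 1) :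
    HasSum (fun ℓ ↦ (1 - s) * s ^ ℓ) 1 := by
  simpa [mul_inv_cancel₀ (sub_ne_zero.2 hs1.ne')] using
    (hasSum_geometric_of_lt_one hs0 hs1).mul_left (1 - s)

theorem hasSum_shift_geometric_weight {G : ℕ → ℝ} {s g : ℝ}
    (h : HasSum (fun ℓ ↦ (1 - s) * s ^ ℓ * G ℓ) g) :
    HasSum (fun ℓ ↦ s * ((1 - s) * s ^ ℓ * G (ℓ + 1))) (g - (1 - s) * G 0) := by
  simpa [pow_succ, mul_comm, mul_left_comm, mul_assoc] using (hasSum_nat_add_iff' 1).2 h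

theorem le_mul_sub_of_le_shift {F G : ℕ → ℝ} {s gF gG : ℝ} (K : ℕ) (hs0 : 0 ≤ s) (hs1 : s < 1)
    (hF : HasSum (fun ℓ ↦ (1 - s) * s ^ ℓ * F ℓ) gF)
    (hG : HasSum (fun ℓ ↦ (1 - s) * s ^ ℓ * G ℓ) gG)
    (hG1 : ∀ ℓ, G ℓ ≤ 1) (hGmono : Monotone G) (hFG : ∀ ℓ, F ℓ ≤ G (ℓ + 1))
    (hF0 : ∀ ℓ < K, F ℓ = 0) :
    (1 - s) * (G 0 * ∑ ℓ ∈ range (K + 1), s ^ ℓ - 1) ≤ s * (gG - gF) := by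
  have h1s : 0 ≤ 1 - s := sub_nonneg.2 hs1.le
  have hweight : ∀ ℓ, 0 ≤ s * ((1 - s) * s ^ ℓ) := fun ℓ ↦ by positivity
  have hgap : HasSum (fun ℓ ↦ s * ((1 - s) * s ^ ℓ) * (G (ℓ + 1) - F ℓ))
      (gG - (1 - s) * G 0 - s * gF) := by
    refine ((hasSum_shift_geometric_weight hG).sub (hF.mul_left s)).congr_fun fun ℓ ↦ ?_
    ring
  have hhead : ∑ ℓ ∈ range K, s * ((1 - s) * s ^ ℓ) * G 0 ≤ gG - (1 - s) * G 0 - s * gF :=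
    calc ∑ ℓ ∈ range K, s * ((1 - s) * s ^ ℓ) * G 0
        ≤ ∑ ℓ ∈ range K, s * ((1 - s) * s ^ ℓ) * (G (ℓ + 1) - F ℓ) := by
          refine sum_le_sum fun ℓ hℓ ↦ ?_
          rw [hF0 ℓ (mem_range.1 hℓ), sub_zero]
          exact mul_le_mul_of_nonneg_left (hGmono (ℓ + 1).zero_le) (hweight ℓ)
      _ ≤ _ := sum_le_hasSum _
          (fun ℓ _ ↦ mul_nonneg (hweight ℓ) (sub_nonneg.2 (hFG ℓ))) hgap
  have hgG : gG ≤ 1 :=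
    hasSum_le (fun ℓ ↦ mul_le_of_le_one_right (by positivity) (hG1 ℓ)) hG
      (hasSum_geometric_weight hs0 hs1)
  have hsum : ∑ ℓ ∈ range (K + 1), s ^ ℓ = s * ∑ ℓ ∈ range K, s ^ ℓ + 1 := by
    rw [sum_range_succ', mul_sum]; simp [pow_succ, mul_comm]
  rw [← sum_mul, ← mul_sum, ← mul_sum] at hhead
  rw [hsum]
  -- `s (gG - gF) = (1 - s) (G 0 - gG) + (gG - (1 - s) G 0 - s gF)`
  nlinarith [mul_le_mul_of_nonneg_left hgG h1s]

theorem le_succ_of_eq_of_odd {F G : ℕ → ℝ} {K : ℕ} (hF : Monotone F) (hG : Monotone G)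
    (hodd : ∀ ℓ, K < ℓ → Odd ℓ → F ℓ = G ℓ) {ℓ : ℕ} (hℓ : K < ℓ) : F ℓ ≤ G (ℓ + 1) := by
  rcases Nat.even_or_odd ℓ with heven | hodd_ℓ
  · exact (hF ℓ.le_succ).trans (hodd (ℓ + 1) (by omega) heven.add_one).le
  · exact (hodd ℓ hℓ hodd_ℓ).le.trans (hG ℓ.le_succ)

section Distribution

variable {Ω : Type*} [MeasurableSpace Ω] {μ : Measure Ω} [IsFiniteMeasure μ] {Z : Ω → ℕ}

/-- Abel summation: `s ^ n = ∑_{ℓ ≥ n} (1 - s) s ^ ℓ`, integrated against the law of `Z`. -/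
theorem hasSum_integral_pow_measureReal_le (hZ : Measurable Z)
    {s : ℝ} (hs0 : 0 ≤ s) (hs1 : s < 1) :
    HasSum (fun ℓ ↦ (1 - s) * s ^ ℓ * μ.real {ω | Z ω ≤ ℓ}) (∫ ω, s ^ Z ω ∂μ) := by
  have hgeom := hasSum_geometric_weight hs0 hs1
  have hweight (ℓ : ℕ) : 0 ≤ (1 - s) * s ^ ℓ := mul_nonneg (sub_nonneg.2 hs1.le) (pow_nonneg hs0 ℓ)
  have hpointwise (n : ℕ) :
      HasSum (fun ℓ ↦ {m : ℕ | n ≤ m}.indicator (fun ℓ ↦ (1 - s) * s ^ ℓ) ℓ) (s ^ n) := by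
    refine (hasSum_nat_add_iff' n).1 ?_
    have hhead : ∑ ℓ ∈ range n, {m : ℕ | n ≤ m}.indicator (fun ℓ ↦ (1 - s) * s ^ ℓ) ℓ = 0 :=
      sum_eq_zero fun ℓ hℓ ↦ Set.indicator_of_notMem (by simpa using hℓ) _
    rw [hhead, sub_zero]
    simpa [pow_add, mul_comm, mul_left_comm, mul_assoc] using hgeom.mul_left (s ^ n)
  have hmeas (ℓ : ℕ) : MeasurableSet {ω | Z ω ≤ ℓ} := hZ measurableSet_Iic
  have := hasSum_integral_of_dominated_convergence (μ := μ)
    (F := fun ℓ ω ↦ {ω | Z ω ≤ ℓ}.indicator (fun _ ↦ (1 - s) * s ^ ℓ) ω)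
    (fun ℓ _ ↦ (1 - s) * s ^ ℓ)
    (fun ℓ ↦ (measurable_const.indicator (hmeas ℓ)).aestronglyMeasurable)
    (fun ℓ ↦ ae_of_all _ fun ω ↦ by
      rw [Real.norm_eq_abs, abs_of_nonneg (Set.indicator_nonneg (fun _ _ ↦ hweight ℓ) ω)]
      exact Set.indicator_le_self' (fun _ _ ↦ hweight ℓ) ω)
    (ae_of_all _ fun _ ↦ hgeom.summable) (integrable_const _)
    (ae_of_all _ fun ω ↦ hpointwise (Z ω))
  simpa [integral_indicator_const _ (hmeas _), mul_comm] using this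

theorem monotone_measureReal_setOf_le : Monotone fun ℓ : ℕ ↦ μ.real {ω | Z ω ≤ ℓ} :=
  fun _ _ hab ↦ measureReal_mono fun _ h ↦ le_trans h hab

theorem measureReal_setOf_le_succ (hZ : Measurable Z) (n : ℕ) :
    μ.real {ω | Z ω ≤ n + 1} = μ.real {ω | Z ω ≤ n} + μ.real {ω | Z ω = n + 1} := by
  have hsplit : {ω | Z ω ≤ n + 1} = {ω | Z ω ≤ n} ∪ {ω | Z ω = n + 1} :=
    Set.ext fun _ ↦ Nat.le_add_one_iff
  rw [hsplit, measureReal_union _ (measurableSet_eq_fun hZ measurable_const)]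
  exact Set.disjoint_left.2 fun _ (h₁ : _ ≤ n) (h₂ : _ = n + 1) ↦ by omega

end Distribution

theorem tail_domination_not_steeper_generating_function_general
    {Ω : Type*} [MeasurableSpace Ω] (μ : Measure Ω) [IsProbabilityMeasure μ]
    (X Y : Ω → ℕ) (hX : Measurable X) (hY : Measurable Y)
    (K : ℕ) (hK1 : 1 ≤ K)
    (p0 : ℝ) (hp0l : 1 / (K + 1 : ℝ) < p0)
    (hXK : (μ {ω | X ω = K}).toReal = p0)
    (hY0 : (μ {ω | Y ω = 0}).toReal = p0)
    (hodd : ∀ ℓ : ℕ, K < ℓ → Odd ℓ →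
      (μ {ω | X ω ≤ ℓ}).toReal = (μ {ω | Y ω ≤ ℓ}).toReal)
    (hXbelow : ∀ ℓ : ℕ, ℓ < K → (μ {ω | X ω ≤ ℓ}).toReal = 0) :
    ∃ s0 < (1:ℝ), ∀ s ∈ Set.Ioo s0 1,
      (∫ ω, s ^ (X ω) ∂μ) < ∫ ω, s ^ (Y ω) ∂μ := by
  simp only [← measureReal_def] at hXK hY0 hodd hXbelow
  set FX : ℕ → ℝ := fun ℓ ↦ μ.real {ω | X ω ≤ ℓ}
  set FY : ℕ → ℝ := fun ℓ ↦ μ.real {ω | Y ω ≤ ℓ}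
  have hFY0 : FY 0 = p0 := by simpa [FY] using hY0
  have hFXK : FX K = p0 := by
    obtain ⟨k, rfl⟩ := Nat.exists_eq_add_of_le' hK1
    simp only [FX]
    rw [measureReal_setOf_le_succ hX, hXbelow k k.lt_succ_self, hXK, zero_add]
  have hshift (ℓ : ℕ) : FX ℓ ≤ FY (ℓ + 1) := by
    rcases lt_trichotomy ℓ K with hlt | rfl | hgt
    · exact (hXbelow ℓ hlt).trans_le measureReal_nonneg
    · exact hFXK.trans_le (hFY0 ▸ monotone_measureReal_setOf_le (ℓ + 1).zero_le)
    · exact le_succ_of_eq_of_odd monotone_measureReal_setOf_le monotone_measureReal_setOf_le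
        hodd hgt
  have hgap (s : ℝ) (hs : s ∈ Set.Ioo 0 1) :
      (1 - s) * (p0 * ∑ ℓ ∈ range (K + 1), s ^ ℓ - 1) ≤
        s * ((∫ ω, s ^ Y ω ∂μ) - ∫ ω, s ^ X ω ∂μ) :=
    hFY0 ▸ le_mul_sub_of_le_shift K hs.1.le hs.2
      (hasSum_integral_pow_measureReal_le hX hs.1.le hs.2)
      (hasSum_integral_pow_measureReal_le hY hs.1.le hs.2)
      (fun _ ↦ measureReal_le_one) monotone_measureReal_setOf_le hshift hXbelow
  have hpos : ∀ᶠ s in 𝓝 (1 : ℝ), 0 < s ∧ 0 < p0 * ∑ ℓ ∈ range (K + 1), s ^ ℓ - 1 := by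
    refine (eventually_gt_nhds one_pos).and (ContinuousAt.eventually_lt continuousAt_const
      (by fun_prop) ?_)
    rw [div_lt_iff₀ (by positivity)] at hp0l
    simpa using hp0l
  obtain ⟨s0, hs01, hsub⟩ := mem_nhdsLT_iff_exists_Ioo_subset.1
    (inter_mem (nhdsWithin_le_nhds hpos) self_mem_nhdsWithin)
  refine ⟨s0, hs01, fun s hs ↦ ?_⟩
  obtain ⟨⟨hs0, hq⟩, hs1 : s < 1⟩ := hsub hs
  have := (mul_pos (sub_pos.2 hs1) hq).trans_le (hgap s ⟨hs0, hs1⟩)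
  exact sub_pos.1 (pos_of_mul_pos_right this hs0.le)

/-- Tail-domination need not imply a steeper generating function at 1:
with `P(X = K) = P(Y = 0) = p0`, `F_X ≥ F_Y` beyond `K` with equality at odd
points, the generating function of `X` is eventually strictly below that of `Y`. -/
theorem tail_domination_not_steeper_generating_function
    {Ω : Type*} [MeasurableSpace Ω] (μ : Measure Ω) [IsProbabilityMeasure μ]
    (X Y : Ω → ℕ) (hX : Measurable X) (hY : Measurable Y)
    (K : ℕ) (hK1 : 1 ≤ K) (hKodd : Odd K)
    (p0 : ℝ) (hp0l : 1 / (K + 1 : ℝ) < p0) (hp0u : p0 < 1)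
    (hXK : (μ {ω | X ω = K}).toReal = p0)
    (hY0 : (μ {ω | Y ω = 0}).toReal = p0)
    (hdom : ∀ ℓ : ℕ, K < ℓ →
      (μ {ω | Y ω ≤ ℓ}).toReal ≤ (μ {ω | X ω ≤ ℓ}).toReal)
    (hodd : ∀ ℓ : ℕ, K < ℓ → Odd ℓ →
      (μ {ω | X ω ≤ ℓ}).toReal = (μ {ω | Y ω ≤ ℓ}).toReal)
    (hXbelow : ∀ ℓ : ℕ, ℓ < K → (μ {ω | X ω ≤ ℓ}).toReal = 0)
    (hYbelow : ∀ ℓ : ℕ, ℓ < K → (μ {ω | Y ω ≤ ℓ}).toReal = p0) :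
    ∃ s0 < (1:ℝ), ∀ s ∈ Set.Ioo s0 1,
      (∫ ω, s ^ (X ω) ∂μ) < ∫ ω, s ^ (Y ω) ∂μ :=
  tail_domination_not_steeper_generating_function_general μ X Y hX hY K hK1 p0 hp0l hXK hY0 hodd
    hXbelow
end

section
/- Let F, G : [0,∞) → [0,1] be two distribution functions (non-decreasing, right-continuous, F(0) = G(0) = 0) whose generalized inverses satisfy ∫_{1/ε}^∞ F^{(−1)}(e^{−u})(1/u) du < ∞ and ∫_{1/ε}^∞ G^{(−1)}(e^{−u})(1/u) du < ∞ for some ε > 0. Then the product H(t) = F(t)·G(t) (the distribution function of the maximum of independent σ ~ F and γ ~ G) also satisfies ∫_{1/ε'}^∞ H^{(−1)}(e^{−u})(1/u) du < ∞ for some ε' > 0. -/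
/-!
If `y ≤ F t` and `y ≤ G t` then `y² ≤ F t * G t`, so once `s` is attained by `F` and by `G` the
generalized inverse of `F·G` at `s²` is at most `max (F⁻¹ s) (G⁻¹ s) ≤ F⁻¹ s + G⁻¹ s`.
The substitution `u = 2v` leaves `du / u` invariant and turns `e^{-u}` into `(e^{-v})²`, so the
integral for `F·G` over `[2c, ∞)` is bounded by the sum of the integrals for `F` and `G` over
`[c, ∞)`, where `c ≥ 1/ε` is taken so large that `e^{-c}` is attained by both.
If `F·G` never becomes positive, its generalized inverse is the junk value `sInf ∅ = 0`.
-/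

open MeasureTheory Set
open scoped ENNReal

/-- The generalized inverse `F^{(-1)}(y) = inf {t : F(t) ≥ y}` of a distribution
function. -/
noncomputable def geninv (F : ℝ → ℝ) (y : ℝ) : ℝ := sInf {t : ℝ | y ≤ F t}

theorem setLIntegral_Ici_comp_mul_left_one_div {k : ℝ} (hk : 0 < k) (f : ℝ → ℝ) (c : ℝ) :
    ∫⁻ v in Ici c, ENNReal.ofReal (f (k * v) * (1 / v)) =
      ∫⁻ u in Ici (k * c), ENNReal.ofReal (f u * (1 / u)) := by
  rw [← image_mul_left_Ici hk, lintegral_image_eq_lintegral_abs_deriv_mul measurableSet_Ici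
    (fun v _ => (hasDerivAt_const_mul k).hasDerivWithinAt) (mul_right_injective₀ hk.ne').injOn]
  refine setLIntegral_congr_fun measurableSet_Ici fun v _ => ?_
  rw [abs_of_pos hk, ← ENNReal.ofReal_mul hk.le]
  congr 1
  rcases eq_or_ne v 0 with rfl | hv
  · simp
  · field_simp

section geninv

variable {F G : ℝ → ℝ} {y z : ℝ}

theorem nonneg_of_monotone_of_eq_zero (hFm : Monotone F) (hF0 : ∀ t ≤ (0:ℝ), F t = 0) (t : ℝ) :
    0 ≤ F t := by
  rcases le_total t 0 with ht | ht
  · exact (hF0 t ht).ge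
  · exact (hF0 0 le_rfl).ge.trans (hFm ht)

theorem zero_mem_lowerBounds_setOf_le_apply (hF0 : ∀ t ≤ (0:ℝ), F t = 0) (hy : 0 < y) :
    0 ∈ lowerBounds {t : ℝ | y ≤ F t} :=
  fun t ht => le_of_not_ge fun h => hy.not_ge (hF0 t h ▸ ht)

theorem geninv_nonneg (hF0 : ∀ t ≤ (0:ℝ), F t = 0) (hy : 0 < y) : 0 ≤ geninv F y :=
  Real.sInf_nonneg (zero_mem_lowerBounds_setOf_le_apply hF0 hy)

theorem geninv_eq_zero_of_forall_lt (h : ∀ t, F t < y) : geninv F y = 0 := by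
  simp [geninv, (h _).not_ge]

theorem le_apply_of_geninv_lt (hFm : Monotone F) (hne : ∃ t, y ≤ F t) {x : ℝ}
    (hx : geninv F y < x) : y ≤ F x := by
  obtain ⟨t, ht, htx⟩ : ∃ t, y ≤ F t ∧ t < x := by
    by_cases hbdd : BddBelow {t : ℝ | y ≤ F t}
    · exact (csInf_lt_iff hbdd hne).mp hx
    · exact not_bddBelow_iff.mp hbdd x
  exact ht.trans (hFm htx.le)

theorem geninv_mono (hF0 : ∀ t ≤ (0:ℝ), F t = 0) (hy : 0 < y) (hyz : y ≤ z)
    (hne : ∃ t, z ≤ F t) : geninv F y ≤ geninv F z :=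
  csInf_le_csInf ⟨0, zero_mem_lowerBounds_setOf_le_apply hF0 hy⟩ hne fun _ ht => hyz.trans ht

theorem geninv_mul_le_max (hFm : Monotone F) (hGm : Monotone G) (hF0 : ∀ t ≤ (0:ℝ), F t = 0)
    (hy : 0 < y) (hz : 0 < z) (hFy : ∃ t, y ≤ F t) (hGz : ∃ t, z ≤ G t) :
    geninv (fun t => F t * G t) (y * z) ≤ max (geninv F y) (geninv G z) := by
  have hbdd : BddBelow {t : ℝ | y * z ≤ F t * G t} :=
    ⟨0, fun t ht => le_of_not_ge fun h => (mul_pos hy hz).not_ge (by simpa [hF0 t h] using ht)⟩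
  refine le_of_forall_gt_imp_ge_of_dense fun x hx => csInf_le hbdd ?_
  have hFx := le_apply_of_geninv_lt hFm hFy (le_max_left _ _ |>.trans_lt hx)
  have hGx := le_apply_of_geninv_lt hGm hGz (le_max_right _ _ |>.trans_lt hx)
  exact mul_le_mul hFx hGx hz.le (hy.le.trans hFx)

theorem geninv_mul_self_le_add (hFm : Monotone F) (hGm : Monotone G)
    (hF0 : ∀ t ≤ (0:ℝ), F t = 0) (hG0 : ∀ t ≤ (0:ℝ), G t = 0) (hy : 0 < y)
    (hFy : ∃ t, y ≤ F t) (hGy : ∃ t, y ≤ G t) :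
    geninv (fun t => F t * G t) (y * y) ≤ geninv F y + geninv G y :=
  (geninv_mul_le_max hFm hGm hF0 hy hy hFy hGy).trans
    (max_le_add_of_nonneg (geninv_nonneg hF0 hy) (geninv_nonneg hG0 hy))

theorem antitoneOn_geninv_exp_neg (hF0 : ∀ t ≤ (0:ℝ), F t = 0) {c : ℝ}
    (hc : ∃ t, Real.exp (-c) ≤ F t) : AntitoneOn (fun v => geninv F (Real.exp (-v))) (Ici c) :=
  fun _ hu _ _ huv => geninv_mono hF0 (Real.exp_pos _) (Real.exp_le_exp.mpr (neg_le_neg huv))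
    (hc.imp fun _ ht => (Real.exp_le_exp.mpr (neg_le_neg hu)).trans ht)

theorem setLIntegral_geninv_mul_le (hFm : Monotone F) (hGm : Monotone G)
    (hF0 : ∀ t ≤ (0:ℝ), F t = 0) (hG0 : ∀ t ≤ (0:ℝ), G t = 0) {c : ℝ} (hc : 0 < c)
    (hFc : ∃ t, Real.exp (-c) ≤ F t) (hGc : ∃ t, Real.exp (-c) ≤ G t) :
    ∫⁻ u in Ici (2 * c), ENNReal.ofReal (geninv (fun t => F t * G t) (Real.exp (-u)) * (1 / u))
      ≤ (∫⁻ v in Ici c, ENNReal.ofReal (geninv F (Real.exp (-v)) * (1 / v))) +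
        ∫⁻ v in Ici c, ENNReal.ofReal (geninv G (Real.exp (-v)) * (1 / v)) := by
  have hFmeas : AEMeasurable (fun v => ENNReal.ofReal (geninv F (Real.exp (-v)) * (1 / v)))
      (volume.restrict (Ici c)) :=
    ENNReal.measurable_ofReal.comp_aemeasurable <|
      (aemeasurable_restrict_of_antitoneOn measurableSet_Ici
        (antitoneOn_geninv_exp_neg hF0 hFc)).mul (measurable_const.div measurable_id).aemeasurable
  rw [← setLIntegral_Ici_comp_mul_left_one_div two_pos, ← lintegral_add_left' hFmeas]
  refine setLIntegral_mono' measurableSet_Ici fun v hv => ?_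
  have hv0 : 0 < 1 / v := one_div_pos.mpr (hc.trans_le hv)
  have hexp : Real.exp (-(2 * v)) = Real.exp (-v) * Real.exp (-v) := by
    rw [← Real.exp_add]; ring_nf
  have hle (K : ℝ → ℝ) (hK : ∃ t, Real.exp (-c) ≤ K t) : ∃ t, Real.exp (-v) ≤ K t :=
    hK.imp fun _ ht => (Real.exp_le_exp.mpr (neg_le_neg hv)).trans ht
  calc ENNReal.ofReal (geninv (fun t => F t * G t) (Real.exp (-(2 * v))) * (1 / v))
      ≤ ENNReal.ofReal ((geninv F (Real.exp (-v)) + geninv G (Real.exp (-v))) * (1 / v)) := by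
        rw [hexp]
        gcongr
        exact geninv_mul_self_le_add hFm hGm hF0 hG0 (Real.exp_pos _) (hle F hFc) (hle G hGc)
    _ = _ := by
        rw [add_mul, ENNReal.ofReal_add (mul_nonneg (geninv_nonneg hF0 (Real.exp_pos _)) hv0.le)
          (mul_nonneg (geninv_nonneg hG0 (Real.exp_pos _)) hv0.le)]

end geninv

theorem integral_criterion_for_product_of_distribution_functions_general
    (F G : ℝ → ℝ) (hFmono : Monotone F) (hGmono : Monotone G)
    (hF0 : ∀ t ≤ (0:ℝ), F t = 0) (hG0 : ∀ t ≤ (0:ℝ), G t = 0)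
    (ε : ℝ) (hε : 0 < ε)
    (hFint : ∫⁻ u in Ici (1 / ε),
      ENNReal.ofReal (geninv F (Real.exp (-u)) * (1 / u)) ≠ ⊤)
    (hGint : ∫⁻ u in Ici (1 / ε),
      ENNReal.ofReal (geninv G (Real.exp (-u)) * (1 / u)) ≠ ⊤) :
    ∃ ε' > (0:ℝ), ∫⁻ u in Ici (1 / ε'),
      ENNReal.ofReal (geninv (fun t => F t * G t) (Real.exp (-u)) * (1 / u)) ≠ ⊤ := by
  by_cases hH : ∃ t, 0 < F t * G t
  swap
  · simp only [not_exists, not_lt] at hH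
    refine ⟨ε, hε, ?_⟩
    simp [geninv_eq_zero_of_forall_lt fun t => (hH t).trans_lt (Real.exp_pos _)]
  obtain ⟨t, ht⟩ := hH
  have hFt : 0 < F t := pos_of_mul_pos_left ht (nonneg_of_monotone_of_eq_zero hGmono hG0 t)
  have hGt : 0 < G t := pos_of_mul_pos_right ht (nonneg_of_monotone_of_eq_zero hFmono hF0 t)
  set c := max (1 / ε) (-Real.log (min (F t) (G t)))
  have hc : 0 < c := (one_div_pos.mpr hε).trans_le (le_max_left _ _)
  have hexp : Real.exp (-c) ≤ min (F t) (G t) := by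
    rw [← Real.le_log_iff_exp_le (lt_min hFt hGt)]
    linarith [le_max_right (1 / ε) (-Real.log (min (F t) (G t)))]
  have htail {K : ℝ → ℝ}
      (hK : ∫⁻ u in Ici (1 / ε), ENNReal.ofReal (geninv K (Real.exp (-u)) * (1 / u)) ≠ ⊤) :
      ∫⁻ v in Ici c, ENNReal.ofReal (geninv K (Real.exp (-v)) * (1 / v)) ≠ ⊤ :=
    ne_top_of_le_ne_top hK (lintegral_mono_set (Ici_subset_Ici.mpr (le_max_left _ _)))
  refine ⟨1 / (2 * c), by positivity, ?_⟩
  rw [one_div_one_div]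
  exact ne_top_of_le_ne_top (ENNReal.add_ne_top.mpr ⟨htail hFint, htail hGint⟩)
    (setLIntegral_geninv_mul_le hFmono hGmono hF0 hG0 hc ⟨t, hexp.trans (min_le_left _ _)⟩
      ⟨t, hexp.trans (min_le_right _ _)⟩)

/-- If the generalized inverses of distribution functions `F` and `G` satisfy the
explosion integral criterion, then so does that of the product `F·G` (the
distribution function of the maximum of independent `σ ~ F` and `γ ~ G`). -/
theorem integral_criterion_for_product_of_distribution_functions
    (F G : ℝ → ℝ) (hFmono : Monotone F) (hGmono : Monotone G)
    (hFrc : ∀ t : ℝ, ContinuousWithinAt F (Ici t) t)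
    (hGrc : ∀ t : ℝ, ContinuousWithinAt G (Ici t) t)
    (hF0 : ∀ t ≤ (0:ℝ), F t = 0) (hG0 : ∀ t ≤ (0:ℝ), G t = 0)
    (hF1 : ∀ t, F t ≤ 1) (hG1 : ∀ t, G t ≤ 1)
    (ε : ℝ) (hε : 0 < ε)
    (hFint : ∫⁻ u in Ici (1 / ε),
      ENNReal.ofReal (geninv F (Real.exp (-u)) * (1 / u)) ≠ ⊤)
    (hGint : ∫⁻ u in Ici (1 / ε),
      ENNReal.ofReal (geninv G (Real.exp (-u)) * (1 / u)) ≠ ⊤) :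
    ∃ ε' > (0:ℝ), ∫⁻ u in Ici (1 / ε'),
      ENNReal.ofReal (geninv (fun t => F t * G t) (Real.exp (-u)) * (1 / u)) ≠ ⊤ :=
  integral_criterion_for_product_of_distribution_functions_general F G hFmono hGmono hF0 hG0 ε hε
    hFint hGint
end

section
/- Let F, G : [0,∞) → [0,1] be distribution functions whose generalized inverses satisfy the integral criterion ∫_{1/ε}^∞ F^{(−1)}(e^{−u})(1/u) du < ∞ and similarly for G. Let σ ~ F and γ ~ G be independent and let H be the distribution function of σ + γ. Then ∫_{1/ε'}^∞ H^{(−1)}(e^{−u})(1/u) du < ∞ for some ε' > 0. -/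
open MeasureTheory Set ProbabilityTheory
open scoped ENNReal

/-!
If `F s ≥ y` and `G t ≥ y`, then by independence `H (s + t) ≥ P(σ ≤ s, γ ≤ t) = F s * G t ≥ y²`,
so `H^{(-1)}(y²) ≤ F^{(-1)}(y) + G^{(-1)}(y)`. Taking `y = e^{-v}` bounds the integrand of `H` at
`2v` by the sum of the integrands of `F` and `G` at `v`, and the substitution `u = 2v` leaves
`du / u` unchanged, so the criterion for `H` holds with `ε' = ε / 2`.
-/

open Filter

section Quantile

variable (ν : Measure ℝ) {y : ℝ}

lemma bddBelow_setOf_le_cdf (hy : 0 < y) : BddBelow {t | y ≤ cdf ν t} := by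
  obtain ⟨b, hb⟩ := eventually_atBot.1 ((tendsto_cdf_atBot ν).eventually_lt_const hy)
  exact ⟨b, fun t ht => not_lt.1 fun htb => (hb t htb.le).not_ge ht⟩

lemma nonempty_setOf_le_cdf (hy : y < 1) : {t | y ≤ cdf ν t}.Nonempty :=
  ((tendsto_cdf_atTop ν).eventually_const_le hy).exists

lemma monotoneOn_geninv_cdf : MonotoneOn (geninv (cdf ν)) (Ioo 0 1) := fun _ hy₁ _ hy₂ h =>
  csInf_le_csInf (bddBelow_setOf_le_cdf ν hy₁.1) (nonempty_setOf_le_cdf ν hy₂.2)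
    fun _ ht => h.trans ht

lemma aemeasurable_geninv_cdf_exp_neg_mul_one_div {c : ℝ} (hc : 0 < c) :
    AEMeasurable (fun u => ENNReal.ofReal (geninv (cdf ν) (Real.exp (-u)) * (1 / u)))
      (volume.restrict (Ici c)) := by
  have hmem : ∀ u ∈ Ici c, Real.exp (-u) ∈ Ioo 0 1 := fun u hu =>
    ⟨Real.exp_pos _, Real.exp_lt_one_iff.2 (by linarith [mem_Ici.1 hu])⟩
  have hanti : AntitoneOn (fun u => geninv (cdf ν) (Real.exp (-u))) (Ici c) :=
    fun u hu v hv huv => monotoneOn_geninv_cdf ν (hmem v hv) (hmem u hu)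
      (Real.exp_le_exp.2 (neg_le_neg huv))
  exact ((aemeasurable_restrict_of_antitoneOn measurableSet_Ici hanti).mul
    (by fun_prop : Measurable fun u : ℝ => 1 / u).aemeasurable).ennreal_ofReal

end Quantile

section Independent

variable {Ω : Type*} [MeasurableSpace Ω] {μ : Measure Ω} [IsProbabilityMeasure μ]
  {σ γ : Ω → ℝ}

lemma cdf_map_eq_toReal {X : Ω → ℝ} (hX : Measurable X) (t : ℝ) :
    cdf (μ.map X) t = (μ {ω | X ω ≤ t}).toReal := by
  have := Measure.isProbabilityMeasure_map (μ := μ) hX.aemeasurable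
  rw [cdf_eq_real, map_measureReal_apply hX measurableSet_Iic]
  rfl

lemma cdf_map_mul_le_cdf_map_add (hσ : Measurable σ) (hγ : Measurable γ)
    (hindep : IndepFun σ γ μ) (s t : ℝ) :
    cdf (μ.map σ) s * cdf (μ.map γ) t ≤ cdf (μ.map (σ + γ)) (s + t) := by
  rw [cdf_map_eq_toReal hσ, cdf_map_eq_toReal hγ, cdf_map_eq_toReal (hσ.add hγ),
    ← ENNReal.toReal_mul]
  refine (congrArg ENNReal.toReal (hindep.measure_inter_preimage_eq_mul _ _
    measurableSet_Iic measurableSet_Iic)).symm.trans_le ?_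
  refine ENNReal.toReal_mono (measure_ne_top _ _) (measure_mono ?_)
  rintro ω ⟨hσω : σ ω ≤ s, hγω : γ ω ≤ t⟩
  exact add_le_add hσω hγω

lemma geninv_cdf_map_add_mul_self_le (hσ : Measurable σ) (hγ : Measurable γ)
    (hindep : IndepFun σ γ μ) {y : ℝ} (hy : y ∈ Ioo 0 1) :
    geninv (cdf (μ.map (σ + γ))) (y * y) ≤
      geninv (cdf (μ.map σ)) y + geninv (cdf (μ.map γ)) y := by
  unfold geninv
  rw [← csInf_add (nonempty_setOf_le_cdf _ hy.2) (bddBelow_setOf_le_cdf _ hy.1)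
    (nonempty_setOf_le_cdf _ hy.2) (bddBelow_setOf_le_cdf _ hy.1)]
  refine csInf_le_csInf (bddBelow_setOf_le_cdf _ (mul_pos hy.1 hy.1))
    ((nonempty_setOf_le_cdf _ hy.2).add (nonempty_setOf_le_cdf _ hy.2)) ?_
  rintro _ ⟨s, hs, t, ht, rfl⟩
  exact (mul_le_mul hs ht hy.1.le (cdf_nonneg _ _)).trans
    (cdf_map_mul_le_cdf_map_add hσ hγ hindep s t)

end Independent

lemma setLIntegral_Ici_ofReal_mul_one_div_comp_mul {a : ℝ} (ha : 0 < a) (c : ℝ) (g : ℝ → ℝ) :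
    ∫⁻ u in Ici (a * c), ENNReal.ofReal (g u * (1 / u)) =
      ∫⁻ v in Ici c, ENNReal.ofReal (g (a * v) * (1 / v)) := by
  have hemb := measurableEmbedding_mulLeft₀ ha.ne'
  have hpre : (a * ·) ⁻¹' Ici (a * c) = Ici c := by
    ext v; simp [mul_le_mul_iff_right₀ ha]
  set φ : ℝ → ℝ≥0∞ := fun u => ENNReal.ofReal (g u * (1 / u))
  have hφ (v : ℝ) : ENNReal.ofReal (g (a * v) * (1 / v)) = ENNReal.ofReal a * φ (a * v) := by
    rw [← ENNReal.ofReal_mul ha.le]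
    congr 1
    field_simp
  have hsubst : ∫⁻ v in Ici c, φ (a * v) = ENNReal.ofReal a⁻¹ * ∫⁻ u in Ici (a * c), φ u := by
    rw [← hemb.lintegral_map, ← hpre, ← hemb.restrict_map, Real.map_volume_mul_left ha.ne',
      Measure.restrict_smul, lintegral_smul_measure, abs_of_pos (inv_pos.2 ha), smul_eq_mul]
  simp_rw [hφ]
  rw [lintegral_const_mul' _ _ ENNReal.ofReal_ne_top, hsubst, ← mul_assoc,
    ← ENNReal.ofReal_mul ha.le, mul_inv_cancel₀ ha.ne', ENNReal.ofReal_one, one_mul]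

theorem integral_criterion_for_sum_of_independent_general
    {Ω : Type*} [MeasurableSpace Ω] (μ : Measure Ω) [IsProbabilityMeasure μ]
    (F G : ℝ → ℝ)
    (σ γ : Ω → ℝ) (hσ : Measurable σ) (hγ : Measurable γ)
    (hindep : IndepFun σ γ μ)
    (hσF : ∀ t : ℝ, (μ {ω | σ ω ≤ t}).toReal = F t)
    (hγG : ∀ t : ℝ, (μ {ω | γ ω ≤ t}).toReal = G t)
    (ε : ℝ) (hε : 0 < ε)
    (hFint : ∫⁻ u in Ici (1 / ε),
      ENNReal.ofReal (geninv F (Real.exp (-u)) * (1 / u)) ≠ ⊤)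
    (hGint : ∫⁻ u in Ici (1 / ε),
      ENNReal.ofReal (geninv G (Real.exp (-u)) * (1 / u)) ≠ ⊤) :
    ∃ ε' > (0:ℝ), ∫⁻ u in Ici (1 / ε'),
      ENNReal.ofReal
        (geninv (fun t => (μ {ω | σ ω + γ ω ≤ t}).toReal) (Real.exp (-u)) * (1 / u))
        ≠ ⊤ := by
  obtain rfl : F = cdf (μ.map σ) := funext fun t => by rw [cdf_map_eq_toReal hσ, hσF]
  obtain rfl : G = cdf (μ.map γ) := funext fun t => by rw [cdf_map_eq_toReal hγ, hγG]
  have hH : (fun t => (μ {ω | σ ω + γ ω ≤ t}).toReal) = cdf (μ.map (σ + γ)) :=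
    funext fun t => (cdf_map_eq_toReal (hσ.add hγ) t).symm
  refine ⟨ε / 2, by positivity, ?_⟩
  rw [hH, show 1 / (ε / 2) = 2 * (1 / ε) by ring,
    setLIntegral_Ici_ofReal_mul_one_div_comp_mul two_pos]
  refine ne_top_of_le_ne_top (ENNReal.add_ne_top.2 ⟨hFint, hGint⟩) ?_
  rw [← lintegral_add_left' (aemeasurable_geninv_cdf_exp_neg_mul_one_div _ (by positivity))]
  refine setLIntegral_mono' measurableSet_Ici fun v hv => ?_
  have hv0 : 0 < v := (one_div_pos.2 hε).trans_le hv
  have hy : Real.exp (-v) ∈ Ioo 0 1 := ⟨Real.exp_pos _, Real.exp_lt_one_iff.2 (by linarith)⟩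
  rw [show -(2 * v) = -v + -v by ring, Real.exp_add]
  refine (ENNReal.ofReal_le_ofReal ?_).trans ENNReal.ofReal_add_le
  rw [← add_mul]
  exact mul_le_mul_of_nonneg_right (geninv_cdf_map_add_mul_self_le hσ hγ hindep hy)
    (by positivity)

/-- If the generalized inverses of distribution functions `F` and `G` satisfy the
explosion integral criterion and `σ ~ F`, `γ ~ G` are independent, then the
distribution function of `σ + γ` also satisfies the criterion. -/
theorem integral_criterion_for_sum_of_independent
    {Ω : Type*} [MeasurableSpace Ω] (μ : Measure Ω) [IsProbabilityMeasure μ]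
    (F G : ℝ → ℝ) (hFmono : Monotone F) (hGmono : Monotone G)
    (hF0 : ∀ t ≤ (0:ℝ), F t = 0) (hG0 : ∀ t ≤ (0:ℝ), G t = 0)
    (hF1 : ∀ t, F t ≤ 1) (hG1 : ∀ t, G t ≤ 1)
    (σ γ : Ω → ℝ) (hσ : Measurable σ) (hγ : Measurable γ)
    (hindep : IndepFun σ γ μ)
    (hσF : ∀ t : ℝ, (μ {ω | σ ω ≤ t}).toReal = F t)
    (hγG : ∀ t : ℝ, (μ {ω | γ ω ≤ t}).toReal = G t)
    (ε : ℝ) (hε : 0 < ε)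
    (hFint : ∫⁻ u in Ici (1 / ε),
      ENNReal.ofReal (geninv F (Real.exp (-u)) * (1 / u)) ≠ ⊤)
    (hGint : ∫⁻ u in Ici (1 / ε),
      ENNReal.ofReal (geninv G (Real.exp (-u)) * (1 / u)) ≠ ⊤) :
    ∃ ε' > (0:ℝ), ∫⁻ u in Ici (1 / ε'),
      ENNReal.ofReal
        (geninv (fun t => (μ {ω | σ ω + γ ω ≤ t}).toReal) (Real.exp (-u)) * (1 / u))
        ≠ ⊤ :=
  integral_criterion_for_sum_of_independent_general μ F G σ γ hσ hγ hindep hσF hγG ε hε hFint hGint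
end

section
/- Let F : [0,1] → [0,1] be a distribution function satisfying F(3^{−n}) = 2^{−n} for all n ≥ 0 (e.g., the distribution function of the natural measure on the Cantor set). Then its generalized inverse satisfies F^{(−1)}(u) ≤ 3·u^{log 3/log 2} for all u ∈ (0, 1/2), and consequently ∫_0^{1/2} F^{(−1)}(e^{−1/y})·(1/y) dy ≤ 3·∫_2^∞ e^{−(log 3/log 2)·z}·(1/z) dz < ∞. -/
open MeasureTheory Set
open scoped ENNReal

/-!
If `F` is monotone with `F(3^{-n}) = 2^{-n}`, then `F(0) ≤ 0`, so for `u > 0` the set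
`{t | u ≤ F t}` is bounded below and `F^{(-1)}(u) ≤ 3^{-n}` as soon as `u ≤ 2^{-n}`.
Taking `n` with `2^{-(n+1)} < u ≤ 2^{-n}` and using `(2^{-1})^{log 3 / log 2} = 3^{-1}` gives
`F^{(-1)}(u) ≤ 3^{-n} = 3 · (2^{-(n+1)})^{log 3 / log 2} ≤ 3 u^{log 3 / log 2}`.
For `u = e^{-1/y}` this is `3 e^{-(log 3 / log 2)/y}`, and the substitution `z = 1/y` turns the
explosion integral over `(0, 1/2]` into `3 ∫_2^∞ e^{-(log 3 / log 2) z} / z dz`, which converges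
because of the exponential decay.
-/

open Real

lemma geninv_le_of_apply_lt_of_le_apply {F : ℝ → ℝ} (hF : Monotone F) {a u t : ℝ}
    (ha : F a < u) (ht : u ≤ F t) : geninv F u ≤ t :=
  csInf_le ⟨a, fun _ hs => (hF.reflect_lt (ha.trans_le hs)).le⟩ ht

section CantorLike

variable {F : ℝ → ℝ}

lemma apply_zero_nonpos_of_apply_inv_three_pow (hFmono : Monotone F)
    (hF : ∀ n : ℕ, F (1 / 3 ^ n) = 1 / 2 ^ n) : F 0 ≤ 0 :=
  ge_of_tendsto'
    (tendsto_pow_atTop_nhds_zero_of_lt_one (by norm_num) (by norm_num : (1 / 2 : ℝ) < 1))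
    fun n => by
      simpa only [hF n, one_div_pow] using hFmono (by positivity : (0 : ℝ) ≤ 1 / 3 ^ n)

lemma geninv_le_inv_three_pow (hFmono : Monotone F) (hF : ∀ n : ℕ, F (1 / 3 ^ n) = 1 / 2 ^ n)
    {u : ℝ} (hu : 0 < u) {n : ℕ} (hun : u ≤ (1 / 2) ^ n) : geninv F u ≤ (1 / 3) ^ n :=
  geninv_le_of_apply_lt_of_le_apply hFmono
    ((apply_zero_nonpos_of_apply_inv_three_pow hFmono hF).trans_lt hu)
    (by rwa [one_div_pow, hF n, ← one_div_pow])

lemma one_half_rpow_log_three_div_log_two : (1 / 2 : ℝ) ^ (log 3 / log 2) = 1 / 3 := by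
  rw [rpow_def_of_pos (by norm_num), one_div, log_inv, neg_mul,
    mul_div_cancel₀ _ (log_pos one_lt_two).ne', exp_neg, exp_log (by norm_num), one_div]

lemma geninv_le_three_mul_rpow (hFmono : Monotone F) (hF : ∀ n : ℕ, F (1 / 3 ^ n) = 1 / 2 ^ n)
    {u : ℝ} (hu0 : 0 < u) (hu1 : u ≤ 1) : geninv F u ≤ 3 * u ^ (log 3 / log 2) := by
  obtain ⟨n, hlt, hle⟩ := exists_nat_pow_near_of_lt_one hu0 hu1
    (by norm_num : (0 : ℝ) < 1 / 2) (by norm_num)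
  have hα : 0 ≤ log 3 / log 2 := by positivity
  calc geninv F u ≤ (1 / 3) ^ n := geninv_le_inv_three_pow hFmono hF hu0 hle
    _ = 3 * ((1 / 2) ^ (log 3 / log 2)) ^ (n + 1) := by
      rw [one_half_rpow_log_three_div_log_two]; ring
    _ = 3 * ((1 / 2) ^ (n + 1)) ^ (log 3 / log 2) := by rw [rpow_pow_comm (by norm_num)]
    _ ≤ 3 * u ^ (log 3 / log 2) := by gcongr

lemma geninv_exp_neg_div_mul_le (hFmono : Monotone F) (hF : ∀ n : ℕ, F (1 / 3 ^ n) = 1 / 2 ^ n)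
    {y : ℝ} (hy : 0 < y) :
    geninv F (exp (-1 / y)) * (1 / y) ≤
      3 * (exp (-(log 3 / log 2) * (1 / y)) * (1 / y)) := by
  have hexp : exp (-1 / y) ≤ 1 :=
    exp_le_one_iff.2 (div_nonpos_of_nonpos_of_nonneg (by norm_num) hy.le)
  calc geninv F (exp (-1 / y)) * (1 / y)
      ≤ 3 * exp (-1 / y) ^ (log 3 / log 2) * (1 / y) := by
        gcongr
        exact geninv_le_three_mul_rpow hFmono hF (exp_pos _) hexp
    _ = 3 * (exp (-(log 3 / log 2) * (1 / y)) * (1 / y)) := by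
      rw [← exp_mul]; ring_nf

end CantorLike

lemma image_inv_Ioc_zero {a : ℝ} (ha : 0 < a) : Inv.inv '' Ioc 0 a = Ici a⁻¹ := by
  ext z
  constructor
  · rintro ⟨y, ⟨hy0, hya⟩, rfl⟩
    exact inv_anti₀ hy0 hya
  · intro hz
    have hz0 : 0 < z := (inv_pos.2 ha).trans_le hz
    exact ⟨z⁻¹, ⟨inv_pos.2 hz0, inv_le_of_inv_le₀ ha hz⟩, inv_inv z⟩

lemma lintegral_Ici_inv_eq_lintegral_Ioc {a : ℝ} (ha : 0 < a) (g : ℝ → ℝ≥0∞) :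
    ∫⁻ z in Ici a⁻¹, g z = ∫⁻ y in Ioc 0 a, ENNReal.ofReal (y ^ 2)⁻¹ * g y⁻¹ := by
  rw [← image_inv_Ioc_zero ha, lintegral_image_eq_lintegral_abs_deriv_mul measurableSet_Ioc
    (fun y hy => (hasDerivAt_inv hy.1.ne').hasDerivWithinAt) inv_injective.injOn]
  refine setLIntegral_congr_fun measurableSet_Ioc fun y _ => ?_
  rw [abs_neg, abs_of_nonneg (by positivity)]

lemma integrableOn_exp_neg_mul_div_Ici {a b : ℝ} (ha : 0 < a) (hb : 0 < b) :
    IntegrableOn (fun z => exp (-b * z) * (1 / z)) (Ici a) := by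
  rw [integrableOn_Ici_iff_integrableOn_Ioi]
  refine ((exp_neg_integrableOn_Ioi a hb).mul_const a⁻¹).mono' (by fun_prop) ?_
  refine (ae_restrict_iff' measurableSet_Ioi).2 (Filter.Eventually.of_forall fun z hz => ?_)
  have hz0 : 0 < z := ha.trans hz
  rw [norm_of_nonneg (by positivity), one_div]
  gcongr
  exact hz.le

lemma lintegral_Ioc_exp_neg_mul_div_eq {a b : ℝ} (ha : 0 < a) (hb : 0 < b) :
    ∫⁻ y in Ioc 0 a, ENNReal.ofReal (exp (-b * (1 / y)) * (1 / y)) =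
      ENNReal.ofReal (∫ z in Ici a⁻¹, exp (-b * z) * (1 / z)) := by
  have hnonneg : ∀ z ∈ Ici a⁻¹, 0 ≤ exp (-b * z) * (1 / z) := fun z hz => by
    have := (inv_pos.2 ha).trans_le hz
    positivity
  rw [ofReal_integral_eq_lintegral_ofReal (integrableOn_exp_neg_mul_div_Ici (inv_pos.2 ha) hb)
    ((ae_restrict_iff' measurableSet_Ici).2 (Filter.Eventually.of_forall hnonneg)),
    lintegral_Ici_inv_eq_lintegral_Ioc ha]
  refine setLIntegral_congr_fun measurableSet_Ioc fun y hy => ?_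
  have := hy.1
  rw [← ENNReal.ofReal_mul (by positivity)]
  congr 1
  field_simp

theorem cantor_distribution_is_explosive_general
    (F : ℝ → ℝ) (hFmono : Monotone F)
    (hF : ∀ n : ℕ, F (1 / 3 ^ n) = 1 / 2 ^ n) :
    (∀ u ∈ Ioo (0:ℝ) (1 / 2),
      geninv F u ≤ 3 * u ^ (Real.log 3 / Real.log 2)) ∧
    (∫⁻ y in Ioc (0:ℝ) (1 / 2),
        ENNReal.ofReal (geninv F (Real.exp (-1 / y)) * (1 / y))) ≤
      ENNReal.ofReal
        (3 * ∫ z in Ici (2:ℝ), Real.exp (-(Real.log 3 / Real.log 2) * z) * (1 / z)) ∧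
    (∫⁻ y in Ioc (0:ℝ) (1 / 2),
        ENNReal.ofReal (geninv F (Real.exp (-1 / y)) * (1 / y))) ≠ ⊤ := by
  have hα : 0 < log 3 / log 2 := div_pos (log_pos (by norm_num)) (log_pos one_lt_two)
  have hbound : (∫⁻ y in Ioc (0:ℝ) (1 / 2),
      ENNReal.ofReal (geninv F (exp (-1 / y)) * (1 / y))) ≤
        ENNReal.ofReal (3 * ∫ z in Ici (2:ℝ), exp (-(log 3 / log 2) * z) * (1 / z)) :=
    calc _ ≤ ∫⁻ y in Ioc (0:ℝ) (1 / 2),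
          ENNReal.ofReal 3 * ENNReal.ofReal (exp (-(log 3 / log 2) * (1 / y)) * (1 / y)) :=
          setLIntegral_mono (by fun_prop) fun y hy => by
            rw [← ENNReal.ofReal_mul (by norm_num)]
            exact ENNReal.ofReal_le_ofReal (geninv_exp_neg_div_mul_le hFmono hF hy.1)
      _ = _ := by
        rw [lintegral_const_mul _ (by fun_prop),
          lintegral_Ioc_exp_neg_mul_div_eq (by norm_num) hα, ← ENNReal.ofReal_mul (by norm_num)]
        norm_num
  exact ⟨fun u hu => geninv_le_three_mul_rpow hFmono hF hu.1 (hu.2.le.trans (by norm_num)),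
    hbound, ne_top_of_le_ne_top ENNReal.ofReal_ne_top hbound⟩

/-- For a distribution function with `F(3^{-n}) = 2^{-n}` (e.g. the Cantor
distribution), `F^{(-1)}(u) ≤ 3 u^{log 3/log 2}` on `(0,1/2)`, and hence the
explosion integral `∫_0^{1/2} F^{(-1)}(e^{-1/y})/y dy` is bounded by
`3 ∫_2^∞ e^{-(log 3/log 2) z}/z dz < ∞`. -/
theorem cantor_distribution_is_explosive
    (F : ℝ → ℝ) (hFmono : Monotone F)
    (hF01 : ∀ t : ℝ, F t ∈ Icc (0:ℝ) 1)
    (hF : ∀ n : ℕ, F (1 / 3 ^ n) = 1 / 2 ^ n) :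
    (∀ u ∈ Ioo (0:ℝ) (1 / 2),
      geninv F u ≤ 3 * u ^ (Real.log 3 / Real.log 2)) ∧
    (∫⁻ y in Ioc (0:ℝ) (1 / 2),
        ENNReal.ofReal (geninv F (Real.exp (-1 / y)) * (1 / y))) ≤
      ENNReal.ofReal
        (3 * ∫ z in Ici (2:ℝ), Real.exp (-(Real.log 3 / Real.log 2) * z) * (1 / z)) ∧
    (∫⁻ y in Ioc (0:ℝ) (1 / 2),
        ENNReal.ofReal (geninv F (Real.exp (-1 / y)) * (1 / y))) ≠ ⊤ :=
  cantor_distribution_is_explosive_general F hFmono hF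
end

section
/- Let F_σ, F_I : [0,∞) → [0,1] be distribution functions with F_σ(0) = F_I(0) = 0, and define F_{I<σ}(t) = ∫_0^t F_I(x) dF_σ(x) (Lebesgue–Stieltjes integral). Suppose there exist a ∈ (0,1), q ∈ [0,1) and t0 > 0 such that F_σ(a t) ≤ q·F_σ(t) for all t ∈ (0, t0]. Then for all t ∈ (0, t0], F_{I<σ}(t) ≥ (1−q)·F_σ(t)·F_I(a t). -/
/-!
On `(a t, t]` the integrand `F_I` is at least `F_I (a t)`, and this interval carries
`F_σ`-mass `F_σ t - F_σ (a t) ≥ (1 - q) F_σ t`; the rest of `(0, t]` contributes a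
nonnegative amount.
-/

open MeasureTheory Set

namespace StieltjesFunction

theorem measureReal_Ioc (G : StieltjesFunction ℝ) {s t : ℝ} (hst : s ≤ t) :
    G.measure.real (Ioc s t) = G t - G s := by
  rw [measureReal_def, G.measure_Ioc, ENNReal.toReal_ofReal (sub_nonneg.2 (G.mono hst))]

theorem mul_le_setIntegral_Ioc_of_monotone (G : StieltjesFunction ℝ) {f : ℝ → ℝ}
    (hf : Monotone f) {s t : ℝ} (hst : s ≤ t) :
    (G t - G s) * f s ≤ ∫ x in Ioc s t, f x ∂G.measure := by
  have hfin : G.measure (Ioc s t) ≠ ⊤ := by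
    rw [G.measure_Ioc]; exact ENNReal.ofReal_ne_top
  calc (G t - G s) * f s = ∫ _ in Ioc s t, f s ∂G.measure := by
        rw [setIntegral_const, G.measureReal_Ioc hst, smul_eq_mul]
    _ ≤ ∫ x in Ioc s t, f x ∂G.measure :=
        setIntegral_mono_on (integrableOn_const hfin)
          (hf.intervalIntegrable (a := s) (b := t)).1
          measurableSet_Ioc fun x hx => hf hx.1.le

end StieltjesFunction

theorem backward_birth_time_lower_bound_general
    (Fσ FI : StieltjesFunction ℝ)
    (hI0 : ∀ t ≤ (0:ℝ), FI t = 0)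
    (a q t0 : ℝ) (ha : a ∈ Ioo (0:ℝ) 1)
    (hdom : ∀ t ∈ Ioc (0:ℝ) t0, Fσ (a * t) ≤ q * Fσ t) :
    ∀ t ∈ Ioc (0:ℝ) t0,
      (1 - q) * Fσ t * FI (a * t) ≤ ∫ x in Ioc (0:ℝ) t, FI x ∂Fσ.measure := by
  intro t ht
  have hFI_nonneg : ∀ x, 0 ≤ x → 0 ≤ FI x := fun x hx => hI0 0 le_rfl ▸ FI.mono hx
  have hat_pos : 0 < a * t := mul_pos ha.1 ht.1
  have hat_le : a * t ≤ t := mul_le_of_le_one_left ht.1.le ha.2.le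
  calc (1 - q) * Fσ t * FI (a * t) ≤ (Fσ t - Fσ (a * t)) * FI (a * t) := by
        gcongr
        · exact hFI_nonneg _ hat_pos.le
        · linarith [hdom t ht]
    _ ≤ ∫ x in Ioc (a * t) t, FI x ∂Fσ.measure :=
        Fσ.mul_le_setIntegral_Ioc_of_monotone FI.mono hat_le
    _ ≤ ∫ x in Ioc (0:ℝ) t, FI x ∂Fσ.measure :=
        setIntegral_mono_set
          (FI.mono.intervalIntegrable (a := 0) (b := t)).1
          (ae_restrict_of_forall_mem measurableSet_Ioc fun x hx => hFI_nonneg x hx.1.le)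
          (Ioc_subset_Ioc_left hat_pos.le).eventuallyLE

/-- Lower bound for the backward-epidemic birth-time distribution
`F_{I<σ}(t) = ∫_0^t F_I dF_σ`: if `F_σ(a t) ≤ q F_σ(t)` on `(0, t0]`, then
`F_{I<σ}(t) ≥ (1-q) F_σ(t) F_I(a t)` there. -/
theorem backward_birth_time_lower_bound
    (Fσ FI : StieltjesFunction ℝ)
    (hσ0 : ∀ t ≤ (0:ℝ), Fσ t = 0) (hI0 : ∀ t ≤ (0:ℝ), FI t = 0)
    (hσ1 : ∀ t : ℝ, Fσ t ≤ 1) (hI1 : ∀ t : ℝ, FI t ≤ 1)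
    (a q t0 : ℝ) (ha : a ∈ Ioo (0:ℝ) 1) (hq : q ∈ Ico (0:ℝ) 1) (ht0 : 0 < t0)
    (hdom : ∀ t ∈ Ioc (0:ℝ) t0, Fσ (a * t) ≤ q * Fσ t) :
    ∀ t ∈ Ioc (0:ℝ) t0,
      (1 - q) * Fσ t * FI (a * t) ≤ ∫ x in Ioc (0:ℝ) t, FI x ∂Fσ.measure :=
  backward_birth_time_lower_bound_general Fσ FI hI0 a q t0 ha hdom
end
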